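/- Let {σ_t} be a T₀-periodic binary sequence with σ_m = 1 for some m ∈ {0,…,T₀−1}, and τ the elapsed-time sequence. If additionally σ_0 = 1 (case (a)), or if σ_0 = 0 and σ_{T₀−1} = 1 (case (b)), then {τ_t} is T₀-periodic: τ_{t+T₀} = τ_t for all t ∈ ℕ. -/
import Mathlib


theorem stmt_6 (T₀ : ℕ) (hT₀ : 1 ≤ T₀) (σ τ : ℕ → ℕ)
    (hbin : ∀ t, σ t = 0 ∨ σ t = 1)
    (hper : ∀ t, σ (t + T₀) = σ t)
    (hτ0 : τ 0 = if σ 0 = 1 then 0 else 1)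
    (hτ : ∀ t, τ (t + 1) = if σ (t + 1) = 1 then 0 else 1 + τ t)
    (hm : ∃ m, m < T₀ ∧ σ m = 1)
    (hcase : σ 0 = 1 ∨ (σ 0 = 0 ∧ σ (T₀ - 1) = 1)) :
    ∀ t, τ (t + T₀) = τ t := by
  have hbase : τ T₀ = τ 0 := by
    rcases hcase with h1 | ⟨h0, hlast⟩
    · obtain ⟨k, hk⟩ : ∃ k, T₀ = k + 1 := ⟨T₀ - 1, by omega⟩
      have hσ : σ (k + 1) = 1 := by
        have := hper 0; rw [zero_add, hk] at this; rw [this]; exact h1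
      rw [hk, hτ k]
      simp [hσ, hτ0, h1]
    · have hT2 : 2 ≤ T₀ := by
        rcases Nat.lt_or_ge T₀ 2 with h | h
        · exfalso
          have : T₀ = 1 := by omega
          rw [this] at hlast; simp at hlast; omega
        · exact h
      obtain ⟨k, hk⟩ : ∃ k, T₀ = k + 2 := ⟨T₀ - 2, by omega⟩
      have hσ1 : σ (k + 1) = 1 := by
        have : T₀ - 1 = k + 1 := by omega
        rw [this] at hlast; exact hlast
      have hτk1 : τ (k + 1) = 0 := by rw [hτ k]; simp [hσ1]
      have hσT : σ (k + 2) = 0 := by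
        have := hper 0; rw [zero_add, hk] at this; rw [this]; exact h0
      rw [hk, show k + 2 = (k + 1) + 1 from rfl, hτ (k + 1), hτk1]
      simp [hσT, hτ0, h0]
  intro t
  induction t with
  | zero => simpa using hbase
  | succ n ih =>
    have hσ : σ (n + T₀ + 1) = σ (n + 1) := by
      rw [show n + T₀ + 1 = (n + 1) + T₀ by ring]; exact hper (n + 1)
    rw [show n + 1 + T₀ = (n + T₀) + 1 by ring, hτ (n + T₀), hτ n, hσ, ih]
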